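/- arXiv:2303.04182 — 2 statements merged into one kernel-verified Lean document; each statement's English description precedes it below -/
import Mathlib

section
/- Let u₁, u₂ be twice continuously differentiable functions on an open set Ω ⊆ ℝⁿ with u₂ > 0 on Ω, let A : Ω → ℝ^{n×n} be a C¹ symmetric matrix field, and let f₁, f₂ : Ω → ℝⁿ be C¹ vector fields. Suppose div(A∇u₁) = div(f₁) and div(A∇u₂) = div(f₂) on Ω. Then the ratio w = u₁/u₂ satisfies div(u₂² A ∇w) = div(u₂ f₁ − u₁ f₂) + (f₂ · ∇u₁ − f₁ · ∇u₂) on Ω. -/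
/-- Partial derivative in the `i`-th coordinate direction. -/
noncomputable def pd {n : ℕ} (i : Fin n) (f : EuclideanSpace ℝ (Fin n) → ℝ)
    (x : EuclideanSpace ℝ (Fin n)) : ℝ :=
  fderiv ℝ f x (EuclideanSpace.single i 1)

/-! Near every point of `Ω` the quotient rule gives `u₂² A∇(u₁/u₂) = u₂ A∇u₁ − u₁ A∇u₂`.
By the product rule for the divergence and the two equations, both `div(u₂ A∇u₁ − u₁ A∇u₂)`
and `div(u₂ f₁ − u₁ f₂)` are `u₂ div f₁ − u₁ div f₂` plus first-order terms; on the left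
these are `A∇u₁ · ∇u₂ − A∇u₂ · ∇u₁ = 0` by the symmetry of `A`, on the right
`f₁ · ∇u₂ − f₂ · ∇u₁`. -/

open Filter Topology Matrix

theorem Matrix.IsSymm.mulVec_dotProduct_comm {ι R : Type*} [Fintype ι] [CommSemiring R]
    {M : Matrix ι ι R} (hM : M.IsSymm) (v w : ι → R) : M *ᵥ v ⬝ᵥ w = M *ᵥ w ⬝ᵥ v := by
  rw [dotProduct_comm, dotProduct_mulVec, ← mulVec_transpose, hM.eq]

section

variable {n : ℕ}

noncomputable def grad (u : EuclideanSpace ℝ (Fin n) → ℝ) (x : EuclideanSpace ℝ (Fin n)) :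
    Fin n → ℝ :=
  fun i => pd i u x

noncomputable def divergence (F : EuclideanSpace ℝ (Fin n) → Fin n → ℝ)
    (x : EuclideanSpace ℝ (Fin n)) : ℝ :=
  ∑ i, pd i (fun y => F y i) x

variable {x : EuclideanSpace ℝ (Fin n)} {c d : EuclideanSpace ℝ (Fin n) → ℝ}

theorem pd_congr_of_eventuallyEq (h : c =ᶠ[𝓝 x] d) (i : Fin n) : pd i c x = pd i d x := by
  rw [pd, pd, h.fderiv_eq]

theorem pd_mul (hc : DifferentiableAt ℝ c x) (hd : DifferentiableAt ℝ d x) (i : Fin n) :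
    pd i (fun y => c y * d y) x = c x * pd i d x + d x * pd i c x := by
  simp [pd, fderiv_fun_mul hc hd]

theorem pd_sub (hc : DifferentiableAt ℝ c x) (hd : DifferentiableAt ℝ d x) (i : Fin n) :
    pd i (fun y => c y - d y) x = pd i c x - pd i d x := by
  simp [pd, fderiv_fun_sub hc hd]

theorem ContDiffOn.contDiffOn_pd {k : WithTop ℕ∞} {s : Set (EuclideanSpace ℝ (Fin n))}
    (hc : ContDiffOn ℝ (k + 1) c s) (hs : IsOpen s) (i : Fin n) : ContDiffOn ℝ k (pd i c) s :=
  (ContinuousLinearMap.apply ℝ ℝ (EuclideanSpace.single i (1 : ℝ))).contDiff.comp_contDiffOn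
    (hc.fderiv_of_isOpen hs le_rfl)

theorem differentiableAt_mulVec_grad {s : Set (EuclideanSpace ℝ (Fin n))} (hs : IsOpen s)
    {A : EuclideanSpace ℝ (Fin n) → Matrix (Fin n) (Fin n) ℝ}
    (hA : ∀ i j, ContDiffOn ℝ 1 (fun y => A y i j) s) (hc : ContDiffOn ℝ 2 c s) (hx : x ∈ s)
    (i : Fin n) : DifferentiableAt ℝ (fun y => (A y *ᵥ grad c y) i) x :=
  show DifferentiableAt ℝ (fun y => ∑ j, A y i j * pd j c y) x from DifferentiableAt.fun_sum fun j _ =>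
    (((hA i j).contDiffAt (hs.mem_nhds hx)).differentiableAt one_ne_zero).fun_mul
      (((hc.contDiffOn_pd (k := 1) hs j).contDiffAt (hs.mem_nhds hx)).differentiableAt
        one_ne_zero)

theorem sq_smul_grad_div (hc : DifferentiableAt ℝ c x) (hd : DifferentiableAt ℝ d x)
    (hx : d x ≠ 0) : d x ^ 2 • grad (fun y => c y / d y) x = d x • grad c x - c x • grad d x := by
  have hquot : c =ᶠ[𝓝 x] fun y => c y / d y * d y := by
    filter_upwards [hd.continuousAt.eventually_ne hx] with y hy
    rw [div_mul_cancel₀ _ hy]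
  have hdiv : DifferentiableAt ℝ (fun y => c y / d y) x := by fun_prop (disch := exact hx)
  have hc' := pd_congr_of_eventuallyEq hquot
  ext i
  simp only [grad, Pi.sub_apply, Pi.smul_apply, smul_eq_mul, hc' i, pd_mul hdiv hd]
  field_simp
  ring

theorem divergence_congr_of_eventuallyEq {F G : EuclideanSpace ℝ (Fin n) → Fin n → ℝ}
    (h : F =ᶠ[𝓝 x] G) : divergence F x = divergence G x := by
  refine Finset.sum_congr rfl fun i _ => pd_congr_of_eventuallyEq ?_ i
  filter_upwards [h] with y hy
  rw [hy]

theorem divergence_smul_sub_smul {F G : EuclideanSpace ℝ (Fin n) → Fin n → ℝ}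
    (hc : DifferentiableAt ℝ c x) (hd : DifferentiableAt ℝ d x)
    (hF : ∀ i, DifferentiableAt ℝ (fun y => F y i) x)
    (hG : ∀ i, DifferentiableAt ℝ (fun y => G y i) x) :
    divergence (fun y => c y • F y - d y • G y) x
      = c x * divergence F x - d x * divergence G x + (F x ⬝ᵥ grad c x - G x ⬝ᵥ grad d x) := by
  have hi : ∀ i, pd i (fun y => (c y • F y - d y • G y) i) x
      = c x * pd i (fun y => F y i) x + F x i * pd i c x
        - (d x * pd i (fun y => G y i) x + G x i * pd i d x) := fun i => by
    simp only [Pi.sub_apply, Pi.smul_apply, smul_eq_mul]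
    rw [pd_sub (hc.fun_mul (hF i)) (hd.fun_mul (hG i)), pd_mul hc (hF i), pd_mul hd (hG i)]
  simp only [divergence, hi, dotProduct, grad, Finset.sum_sub_distrib, Finset.sum_add_distrib,
    Finset.mul_sum]
  ring

end

/-- ratio lemma.  If `div(A∇u₁) = div f₁` and `div(A∇u₂) = div f₂` on an
open set `Ω` with `A` symmetric and `u₂ > 0`, then `w = u₁/u₂` satisfies
`div(u₂² A ∇w) = div(u₂ f₁ − u₁ f₂) + (f₂·∇u₁ − f₁·∇u₂)` on `Ω`. -/
theorem ratio_lemma {n : ℕ} (Ω : Set (EuclideanSpace ℝ (Fin n))) (hΩ : IsOpen Ω)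
    (u₁ u₂ : EuclideanSpace ℝ (Fin n) → ℝ)
    (A : EuclideanSpace ℝ (Fin n) → Fin n → Fin n → ℝ)
    (f₁ f₂ : EuclideanSpace ℝ (Fin n) → Fin n → ℝ)
    (hu₁ : ContDiffOn ℝ 2 u₁ Ω) (hu₂ : ContDiffOn ℝ 2 u₂ Ω)
    (hpos : ∀ x ∈ Ω, 0 < u₂ x)
    (hA : ∀ i j, ContDiffOn ℝ 1 (fun x => A x i j) Ω)
    (hsym : ∀ x ∈ Ω, ∀ i j, A x i j = A x j i)
    (hf₁ : ∀ i, ContDiffOn ℝ 1 (fun x => f₁ x i) Ω)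
    (hf₂ : ∀ i, ContDiffOn ℝ 1 (fun x => f₂ x i) Ω)
    (heq₁ : ∀ x ∈ Ω,
      ∑ i, pd i (fun y => ∑ j, A y i j * pd j u₁ y) x = ∑ i, pd i (fun y => f₁ y i) x)
    (heq₂ : ∀ x ∈ Ω,
      ∑ i, pd i (fun y => ∑ j, A y i j * pd j u₂ y) x = ∑ i, pd i (fun y => f₂ y i) x) :
    ∀ x ∈ Ω,
      ∑ i, pd i (fun y => (u₂ y) ^ 2 * ∑ j, A y i j * pd j (fun z => u₁ z / u₂ z) y) x
        = ∑ i, pd i (fun y => u₂ y * f₁ y i - u₁ y * f₂ y i) x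
          + ((∑ i, f₂ x i * pd i u₁ x) - ∑ i, f₁ x i * pd i u₂ x) := by
  intro x hx
  have hdiff : ∀ {k : WithTop ℕ∞} {v : EuclideanSpace ℝ (Fin n) → ℝ}, ContDiffOn ℝ k v Ω →
      k ≠ 0 → ∀ y ∈ Ω, DifferentiableAt ℝ v y := fun hv hk y hy =>
    (hv.contDiffAt (hΩ.mem_nhds hy)).differentiableAt hk
  have hflux : (fun y => u₂ y ^ 2 • (of (A y) *ᵥ grad (fun z => u₁ z / u₂ z) y))
      =ᶠ[𝓝 x] fun y => u₂ y • (of (A y) *ᵥ grad u₁ y) - u₁ y • (of (A y) *ᵥ grad u₂ y) := by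
    filter_upwards [hΩ.mem_nhds hx] with y hy
    have hgrad := sq_smul_grad_div (hdiff hu₁ two_ne_zero y hy) (hdiff hu₂ two_ne_zero y hy)
      (hpos y hy).ne'
    simp only [← mulVec_smul, hgrad, mulVec_sub]
  have hcancel : of (A x) *ᵥ grad u₁ x ⬝ᵥ grad u₂ x = of (A x) *ᵥ grad u₂ x ⬝ᵥ grad u₁ x :=
    (IsSymm.ext fun i j => hsym x hx j i).mulVec_dotProduct_comm _ _
  have hdiv₁ : divergence (fun y => of (A y) *ᵥ grad u₁ y) x = divergence f₁ x := heq₁ x hx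
  have hdiv₂ : divergence (fun y => of (A y) *ᵥ grad u₂ y) x = divergence f₂ x := heq₂ x hx
  change divergence (fun y => u₂ y ^ 2 • (of (A y) *ᵥ grad (fun z => u₁ z / u₂ z) y)) x
    = divergence (fun y => u₂ y • f₁ y - u₁ y • f₂ y) x + (f₂ x ⬝ᵥ grad u₁ x - f₁ x ⬝ᵥ grad u₂ x)
  have hu₁x := hdiff hu₁ two_ne_zero x hx
  have hu₂x := hdiff hu₂ two_ne_zero x hx
  have hAu₁x := differentiableAt_mulVec_grad (A := fun y => of (A y)) hΩ hA hu₁ hx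
  have hAu₂x := differentiableAt_mulVec_grad (A := fun y => of (A y)) hΩ hA hu₂ hx
  rw [divergence_congr_of_eventuallyEq hflux, divergence_smul_sub_smul hu₂x hu₁x hAu₁x hAu₂x,
    divergence_smul_sub_smul hu₂x hu₁x (fun i => hdiff (hf₁ i) one_ne_zero x hx)
      (fun i => hdiff (hf₂ i) one_ne_zero x hx), hcancel, hdiv₁, hdiv₂]
  ring
end

section
/- Let g be a formal power series with nonnegative coefficients and g(0) > 0, let C > 0, and consider the formal power series identity F(t) = C·(Ω(t) + g(t))/(1 − t − (A(t) − A(0))), where A is a power series with nonnegative coefficients and A(0) ≥ 0. If Ω is a power series with nonnegative coefficients satisfying Ω' ≪ F coefficientwise, and y solves the analytic ODE y'(t) = C(y(t)+g(t))/(1 − t − (A(t) − A(0))) with y(0) = Ω(0), where g and A are convergent near 0 and 1 − t − (A(t)−A(0)) is positive near t = 0, then Ω ≪ y as formal power series; in particular Ω has a positive radius of convergence. -/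
/-!
Write `1 − t − (A(t) − A(0)) = 1 − t·P` with `P = 1 + (A − A(0))/t`, which has nonnegative
coefficients; hence so has `B = (1 − t·P)⁻¹`, since `Bₙ₊₁ = (B·P)ₙ`. The coefficient of `tⁿ` in
`C(W + g)B` is therefore monotone in the coefficients of `W` of index `≤ n`, and comparing
`(n+1)Ωₙ₊₁ ≤ [C(Ω + g)B]ₙ` with `(n+1)Yₙ₊₁ = [C(Y + g)B]ₙ` index by index gives `Ω ≪ Y`.

For convergence, `B` and `Ω + g` both satisfy a recursive inequality
`aₙ₊₁ ≤ Σ_{i+j=n} aᵢbⱼ + eₙ` with `b ≥ 0` and `b, e ≤ K rⁿ`, and such a sequence is bounded by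
`M qⁿ`: the bound propagates through the recursion as soon as `q ≥ 2r` and `q ≥ 3K`.
-/

open PowerSeries

/-- Majorization of formal power series: `f ≪ g` iff `|aₙ| ≤ bₙ` for every `n`. -/
def Majorizes (f g : PowerSeries ℝ) : Prop :=
  ∀ n : ℕ, |PowerSeries.coeff n f| ≤ PowerSeries.coeff n g

/-- The formal derivative of a power series. -/
noncomputable def psDeriv (f : PowerSeries ℝ) : PowerSeries ℝ :=
  PowerSeries.mk fun n => (n + 1 : ℝ) * PowerSeries.coeff (n + 1) f

/-- The right-hand side `C·(Ω + g)/(1 − t − (A(t) − A(0)))` of the majorant ODE,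
as a formal power series. -/
noncomputable def odeRHS (c : ℝ) (g A Ω : PowerSeries ℝ) : PowerSeries ℝ :=
  PowerSeries.C c * ((Ω + g) *
    (1 - PowerSeries.X - (A - PowerSeries.C (PowerSeries.constantCoeff A)))⁻¹)

open Finset

def GeomBounded (a : ℕ → ℝ) : Prop :=
  ∃ K r : ℝ, 0 ≤ K ∧ 0 < r ∧ ∀ n, a n ≤ K * r ^ n

lemma sum_antidiagonal_pow_mul_pow_le {q r : ℝ} (hr : 0 ≤ r) (hrq : 2 * r ≤ q) (n : ℕ) :
    ∑ p ∈ antidiagonal n, q ^ p.1 * r ^ p.2 ≤ 2 * q ^ n := by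
  have hq : 0 ≤ q := by linarith
  calc ∑ p ∈ antidiagonal n, q ^ p.1 * r ^ p.2
      ≤ ∑ p ∈ antidiagonal n, q ^ n * (1 / 2) ^ p.2 := by
        refine sum_le_sum fun p hp => ?_
        calc q ^ p.1 * r ^ p.2 ≤ q ^ p.1 * (q * (1 / 2)) ^ p.2 := by gcongr; linarith
          _ = q ^ n * (1 / 2) ^ p.2 := by
            rw [mul_pow, ← mul_assoc, ← pow_add, mem_antidiagonal.mp hp]
    _ = q ^ n * ∑ i ∈ range (n + 1), (1 / 2 : ℝ) ^ i := by
        rw [← mul_sum, ← Nat.sum_antidiagonal_swap]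
        simp only [Prod.snd_swap]
        rw [Nat.sum_antidiagonal_eq_sum_range_succ (fun i _ => (1 / 2 : ℝ) ^ i)]
    _ ≤ 2 * q ^ n := by
        rw [mul_comm]
        exact mul_le_mul_of_nonneg_right (sum_geometric_two_le _) (pow_nonneg hq n)

lemma le_mul_pow_of_le_convolution {a b e : ℕ → ℝ} {K r M q : ℝ}
    (hb0 : ∀ n, 0 ≤ b n) (hb : ∀ n, b n ≤ K * r ^ n) (he : ∀ n, e n ≤ K * r ^ n)
    (hr : 0 ≤ r) (hrq : 2 * r ≤ q) (hKq : 3 * K ≤ q) (hM : 1 ≤ M) (ha0 : a 0 ≤ M)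
    (hrec : ∀ n, a (n + 1) ≤ ∑ p ∈ antidiagonal n, a p.1 * b p.2 + e n) (n : ℕ) :
    a n ≤ M * q ^ n := by
  have hK : 0 ≤ K := by simpa using (hb0 0).trans (hb 0)
  have hq : 0 ≤ q := by linarith
  induction n using Nat.strong_induction_on with
  | _ n ih =>
  cases n with
  | zero => simpa using ha0
  | succ n =>
  have hsum : ∑ p ∈ antidiagonal n, a p.1 * b p.2 ≤
      ∑ p ∈ antidiagonal n, M * q ^ p.1 * (K * r ^ p.2) :=
    sum_le_sum fun p hp =>
      mul_le_mul (ih p.1 (Nat.antidiagonal.fst_lt hp)) (hb p.2) (hb0 p.2) (by positivity)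
  have hMKq : K * q ^ n ≤ M * K * q ^ n := by
    have := mul_le_mul_of_nonneg_right hM (mul_nonneg hK (pow_nonneg hq n))
    linarith
  have h3K : 3 * K * (M * q ^ n) ≤ q * (M * q ^ n) :=
    mul_le_mul_of_nonneg_right hKq (by positivity)
  calc a (n + 1)
      ≤ ∑ p ∈ antidiagonal n, M * q ^ p.1 * (K * r ^ p.2) + K * r ^ n :=
        (hrec n).trans (add_le_add hsum (he n))
    _ = M * K * ∑ p ∈ antidiagonal n, q ^ p.1 * r ^ p.2 + K * r ^ n := by
        rw [mul_sum]; congr 1; exact sum_congr rfl fun p _ => by ring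
    _ ≤ M * K * (2 * q ^ n) + K * q ^ n := by
        gcongr
        · exact sum_antidiagonal_pow_mul_pow_le hr hrq n
        · linarith
    _ ≤ M * q ^ (n + 1) := by rw [pow_succ]; linarith

namespace GeomBounded

variable {a b e : ℕ → ℝ}

lemma exists_common (ha : GeomBounded a) (hb : GeomBounded b) :
    ∃ K r : ℝ, 0 ≤ K ∧ 0 < r ∧ (∀ n, a n ≤ K * r ^ n) ∧ ∀ n, b n ≤ K * r ^ n := by
  obtain ⟨Ka, ra, hKa, hra, ha⟩ := ha
  obtain ⟨Kb, rb, hKb, hrb, hb⟩ := hb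
  refine ⟨max Ka Kb, max ra rb, le_max_of_le_left hKa, lt_max_of_lt_left hra,
    fun n => (ha n).trans ?_, fun n => (hb n).trans ?_⟩ <;> gcongr
  exacts [le_max_left _ _, le_max_left _ _, le_max_right _ _, le_max_right _ _]

lemma of_le (hb : GeomBounded b) (h : ∀ n, a n ≤ b n) : GeomBounded a :=
  let ⟨K, r, hK, hr, hb⟩ := hb
  ⟨K, r, hK, hr, fun n => (h n).trans (hb n)⟩

lemma add (ha : GeomBounded a) (hb : GeomBounded b) : GeomBounded fun n => a n + b n := by
  obtain ⟨K, r, hK, hr, ha, hb⟩ := ha.exists_common hb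
  exact ⟨2 * K, r, by positivity, hr, fun n => by linarith [ha n, hb n]⟩

lemma const_mul {c : ℝ} (hc : 0 ≤ c) (ha : GeomBounded a) : GeomBounded fun n => c * a n := by
  obtain ⟨K, r, hK, hr, ha⟩ := ha
  exact ⟨c * K, r, by positivity, hr, fun n => by
    rw [mul_assoc]; exact mul_le_mul_of_nonneg_left (ha n) hc⟩

lemma comp_succ (ha : GeomBounded a) : GeomBounded fun n => a (n + 1) := by
  obtain ⟨K, r, hK, hr, ha⟩ := ha
  exact ⟨K * r, r, by positivity, hr, fun n => by rw [mul_assoc, ← pow_succ']; exact ha _⟩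

lemma of_summable (h : ∃ r > 0, Summable fun n => a n * r ^ n) : GeomBounded a := by
  obtain ⟨r, hr, hs⟩ := h
  obtain ⟨K, hK⟩ := hs.tendsto_atTop_zero.bddAbove_range
  refine ⟨max K 0, r⁻¹, le_max_right _ _, inv_pos.mpr hr, fun n => ?_⟩
  rw [inv_pow, ← div_eq_mul_inv, le_div_iff₀ (pow_pos hr n)]
  exact (hK (Set.mem_range_self n)).trans (le_max_left _ _)

lemma exists_summable (h : GeomBounded a) (ha : ∀ n, 0 ≤ a n) :
    ∃ r > 0, Summable fun n => a n * r ^ n := by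
  obtain ⟨K, r, hK, hr, h⟩ := h
  refine ⟨(2 * r)⁻¹, by positivity, ?_⟩
  refine .of_nonneg_of_le (fun n => by have := ha n; positivity) (fun n => ?_)
    ((summable_geometric_of_lt_one (r := 1 / 2) (by norm_num) (by norm_num)).mul_left K)
  calc a n * (2 * r)⁻¹ ^ n ≤ K * r ^ n * (2 * r)⁻¹ ^ n := by gcongr; exact h n
    _ = K * (1 / 2) ^ n := by rw [mul_assoc, ← mul_pow]; field_simp

lemma of_le_convolution (hb0 : ∀ n, 0 ≤ b n) (hb : GeomBounded b) (he : GeomBounded e)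
    (hrec : ∀ n, a (n + 1) ≤ ∑ p ∈ antidiagonal n, a p.1 * b p.2 + e n) : GeomBounded a := by
  obtain ⟨K, r, -, hr, hbK, heK⟩ := hb.exists_common he
  exact ⟨max (a 0) 1, max (2 * r) (3 * K), le_max_of_le_right zero_le_one,
    lt_max_of_lt_left (by positivity),
    le_mul_pow_of_le_convolution hb0 hbK heK hr.le (le_max_left _ _) (le_max_right _ _)
      (le_max_right _ _) (le_max_left _ _) hrec⟩

end GeomBounded

lemma coeff_psDeriv (f : PowerSeries ℝ) (n : ℕ) :
    coeff n (psDeriv f) = (n + 1) * coeff (n + 1) f := by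
  simp [psDeriv]

lemma coeff_succ_inv_one_sub_X_mul {k : Type*} [Field k] (P : PowerSeries k) (n : ℕ) :
    coeff (n + 1) (1 - X * P)⁻¹ = coeff n ((1 - X * P)⁻¹ * P) := by
  have hinv : (1 - X * P) * (1 - X * P)⁻¹ = 1 := PowerSeries.mul_inv_cancel _ (by simp)
  have hrec : (1 - X * P)⁻¹ = 1 + X * ((1 - X * P)⁻¹ * P) := by
    linear_combination hinv
  conv_lhs => rw [hrec]
  simp [coeff_succ_X_mul]

lemma coeff_inv_one_sub_X_mul_nonneg {P : PowerSeries ℝ} (hP : ∀ n, 0 ≤ coeff n P) (n : ℕ) :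
    0 ≤ coeff n (1 - X * P)⁻¹ := by
  induction n using Nat.strong_induction_on with
  | _ n ih =>
  cases n with
  | zero => simp
  | succ n =>
  rw [coeff_succ_inv_one_sub_X_mul, coeff_mul]
  exact sum_nonneg fun p hp => mul_nonneg (ih p.1 (Nat.antidiagonal.fst_lt hp)) (hP p.2)

lemma GeomBounded.coeff_inv_one_sub_X_mul {P : PowerSeries ℝ} (hP0 : ∀ n, 0 ≤ coeff n P)
    (hP : GeomBounded fun n => coeff n P) : GeomBounded fun n => coeff n (1 - X * P)⁻¹ :=
  .of_le_convolution (e := fun _ => 0) hP0 hP ⟨0, 1, le_rfl, one_pos, fun _ => by simp⟩ fun n => by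
    rw [coeff_succ_inv_one_sub_X_mul, coeff_mul, add_zero]

noncomputable def odeDenomInv (A : PowerSeries ℝ) : PowerSeries ℝ :=
  (1 - X - (A - C (constantCoeff A)))⁻¹

lemma odeRHS_eq (c : ℝ) (g A W : PowerSeries ℝ) :
    odeRHS c g A W = C c * ((W + g) * odeDenomInv A) :=
  rfl

lemma odeDenomInv_eq (A : PowerSeries ℝ) :
    odeDenomInv A = (1 - X * (1 + PowerSeries.mk fun n => coeff (n + 1) A))⁻¹ := by
  rw [odeDenomInv]
  nth_rewrite 1 [eq_X_mul_shift_add_const A]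
  ring_nf

lemma coeff_one_add_shift_nonneg {A : PowerSeries ℝ} (hA : ∀ n, 0 ≤ coeff n A) (n : ℕ) :
    0 ≤ coeff n (1 + PowerSeries.mk fun m => coeff (m + 1) A) := by
  rw [map_add, coeff_one, coeff_mk]
  have := hA (n + 1)
  split_ifs <;> linarith

lemma coeff_odeDenomInv_nonneg {A : PowerSeries ℝ} (hA : ∀ n, 0 ≤ coeff n A) (n : ℕ) :
    0 ≤ coeff n (odeDenomInv A) := by
  rw [odeDenomInv_eq]
  exact coeff_inv_one_sub_X_mul_nonneg (coeff_one_add_shift_nonneg hA) n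

lemma GeomBounded.coeff_odeDenomInv {A : PowerSeries ℝ} (hA0 : ∀ n, 0 ≤ coeff n A)
    (hA : GeomBounded fun n => coeff n A) : GeomBounded fun n => coeff n (odeDenomInv A) := by
  rw [odeDenomInv_eq]
  refine .coeff_inv_one_sub_X_mul (coeff_one_add_shift_nonneg hA0) ?_
  simp only [map_add, coeff_mk]
  refine .add (.of_le (b := fun _ => 1) ⟨1, 1, zero_le_one, one_pos, fun _ => by simp⟩
    fun m => ?_) hA.comp_succ
  rw [coeff_one]
  split_ifs <;> norm_num

section Comparison

variable {c : ℝ} {g A : PowerSeries ℝ}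

lemma coeff_odeRHS (W : PowerSeries ℝ) (n : ℕ) :
    coeff n (odeRHS c g A W) =
      ∑ p ∈ antidiagonal n, coeff p.1 (W + g) * (c * coeff p.2 (odeDenomInv A)) := by
  rw [odeRHS_eq, coeff_C_mul, coeff_mul, mul_sum]
  exact sum_congr rfl fun _ _ => by ring

lemma coeff_odeRHS_mono (hc : 0 ≤ c) (hA : ∀ n, 0 ≤ coeff n A) {W W' : PowerSeries ℝ} {n : ℕ}
    (h : ∀ i ≤ n, coeff i W ≤ coeff i W') :
    coeff n (odeRHS c g A W) ≤ coeff n (odeRHS c g A W') := by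
  rw [coeff_odeRHS, coeff_odeRHS]
  refine sum_le_sum fun p hp => ?_
  have := h p.1 (HasAntidiagonal.antidiagonal.fst_le hp)
  have := coeff_odeDenomInv_nonneg hA p.2
  rw [map_add, map_add]
  gcongr

lemma coeff_le_of_psDeriv_le_odeRHS (hc : 0 ≤ c) (hA : ∀ n, 0 ≤ coeff n A) {W Y : PowerSeries ℝ}
    (hW : ∀ n, coeff n (psDeriv W) ≤ coeff n (odeRHS c g A W))
    (hY : psDeriv Y = odeRHS c g A Y) (h0 : coeff 0 W ≤ coeff 0 Y) (n : ℕ) :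
    coeff n W ≤ coeff n Y := by
  induction n using Nat.strong_induction_on with
  | _ n ih =>
  cases n with
  | zero => exact h0
  | succ n =>
  refine le_of_mul_le_mul_left ?_ (by positivity : (0 : ℝ) < n + 1)
  calc (n + 1) * coeff (n + 1) W ≤ coeff n (odeRHS c g A W) := by
        rw [← coeff_psDeriv]; exact hW n
    _ ≤ coeff n (odeRHS c g A Y) :=
        coeff_odeRHS_mono hc hA fun i hi => ih i (Nat.lt_succ_of_le hi)
    _ = (n + 1) * coeff (n + 1) Y := by rw [← hY, coeff_psDeriv]

lemma GeomBounded.of_psDeriv_le_odeRHS (hc : 0 ≤ c) (hg0 : ∀ n, 0 ≤ coeff n g)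
    (hg : GeomBounded fun n => coeff n g) (hA0 : ∀ n, 0 ≤ coeff n A)
    (hA : GeomBounded fun n => coeff n A) {W : PowerSeries ℝ} (hW0 : ∀ n, 0 ≤ coeff n W)
    (hW : ∀ n, coeff n (psDeriv W) ≤ coeff n (odeRHS c g A W)) :
    GeomBounded fun n => coeff n W := by
  have hrec (n : ℕ) : coeff (n + 1) (W + g) ≤
      ∑ p ∈ antidiagonal n, coeff p.1 (W + g) * (c * coeff p.2 (odeDenomInv A)) +
        coeff (n + 1) g := by
    have hn : coeff (n + 1) W ≤ (n + 1) * coeff (n + 1) W :=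
      le_mul_of_one_le_left (hW0 _) (by simp)
    rw [map_add, ← coeff_odeRHS]
    linarith [coeff_psDeriv W n ▸ hW n]
  have hWg : GeomBounded fun n => coeff n (W + g) :=
    .of_le_convolution (fun n => mul_nonneg hc (coeff_odeDenomInv_nonneg hA0 n))
      ((GeomBounded.coeff_odeDenomInv hA0 hA).const_mul hc) hg.comp_succ hrec
  exact hWg.of_le fun n => by simpa using hg0 n

end Comparison

theorem majorant_ode_general (c : ℝ) (hc : 0 < c) (g A Ω Y : PowerSeries ℝ)
    (hg : ∀ n : ℕ, 0 ≤ PowerSeries.coeff n g)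
    (hA : ∀ n : ℕ, 0 ≤ PowerSeries.coeff n A)
    (hΩ : ∀ n : ℕ, 0 ≤ PowerSeries.coeff n Ω)
    (hmaj : Majorizes (psDeriv Ω) (odeRHS c g A Ω))
    (hgconv : ∃ r > (0 : ℝ), Summable fun n : ℕ => PowerSeries.coeff n g * r ^ n)
    (hAconv : ∃ r > (0 : ℝ), Summable fun n : ℕ => PowerSeries.coeff n A * r ^ n)
    (hYode : psDeriv Y = odeRHS c g A Y)
    (hY0 : PowerSeries.constantCoeff Y = PowerSeries.constantCoeff Ω) :
    Majorizes Ω Y ∧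
      ∃ r > (0 : ℝ), Summable fun n : ℕ => |PowerSeries.coeff n Ω| * r ^ n := by
  have hΩ' (n : ℕ) : coeff n (psDeriv Ω) ≤ coeff n (odeRHS c g A Ω) :=
    (le_abs_self _).trans (hmaj n)
  simp only [Majorizes, abs_of_nonneg (hΩ _)]
  refine ⟨coeff_le_of_psDeriv_le_odeRHS hc.le hA hΩ' hYode (by simp [hY0]), ?_⟩
  exact (GeomBounded.of_psDeriv_le_odeRHS hc.le hg (.of_summable hgconv) hA
    (.of_summable hAconv) hΩ hΩ').exists_summable hΩ

/-- majorization by the solution of an analytic ODE.  If `Ω` has nonnegative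
coefficients and `Ω' ≪ C(Ω+g)/(1 − t − (A−A(0)))` coefficientwise, where `g, A` have
nonnegative coefficients, `g(0) > 0`, `C > 0`, and `g, A` are convergent near `0`, and `Y`
is the (analytic) solution of the corresponding ODE with `Y(0) = Ω(0)`, then `Ω ≪ Y`; in
particular `Ω` has a positive radius of convergence. -/
theorem majorant_ode (c : ℝ) (hc : 0 < c) (g A Ω Y : PowerSeries ℝ)
    (hg : ∀ n : ℕ, 0 ≤ PowerSeries.coeff n g)
    (hg0 : 0 < PowerSeries.constantCoeff g)
    (hA : ∀ n : ℕ, 0 ≤ PowerSeries.coeff n A)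
    (hΩ : ∀ n : ℕ, 0 ≤ PowerSeries.coeff n Ω)
    (hmaj : Majorizes (psDeriv Ω) (odeRHS c g A Ω))
    (hgconv : ∃ r > (0 : ℝ), Summable fun n : ℕ => PowerSeries.coeff n g * r ^ n)
    (hAconv : ∃ r > (0 : ℝ), Summable fun n : ℕ => PowerSeries.coeff n A * r ^ n)
    (hYode : psDeriv Y = odeRHS c g A Y)
    (hY0 : PowerSeries.constantCoeff Y = PowerSeries.constantCoeff Ω) :
    Majorizes Ω Y ∧
      ∃ r > (0 : ℝ), Summable fun n : ℕ => |PowerSeries.coeff n Ω| * r ^ n :=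
  majorant_ode_general c hc g A Ω Y hg hA hΩ hmaj hgconv hAconv hYode hY0
end
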